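/- arXiv:math-ph/0605023 — 3 statements merged into one kernel-verified Lean document; each statement's English description precedes it below -/
import Mathlib

section
/- For all real 3×3 matrices A, B, C with A and C symmetric, the tensor field K = K_{A,B,C} satisfies the valence-two Killing tensor equation on flat Euclidean 3-space: for every x ∈ ℝ³ and all indices i, j, k ∈ {1,2,3}, ∂_k K_{ij}(x) + ∂_i K_{jk}(x) + ∂_j K_{ki}(x) = 0 (equivalently, the total symmetrization of ∂_k K_{ij} vanishes). -/
open Matrix

/-- 3×3 real matrices. -/
abbrev M3 := Matrix (Fin 3) (Fin 3) ℝ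

/-- The cross-product matrix `Sₓ`, satisfying `Sₓ v = x × v`. -/
def Smat (x : Fin 3 → ℝ) : M3 :=
  !![0, -x 2, x 1; x 2, 0, -x 0; -x 1, x 0, 0]

/-- The Killing tensor field `K_{A,B,C}(x) = A + Sₓ Bᵀ + B Sₓᵀ + Sₓ C Sₓᵀ`. -/
def KABC (A B C : M3) (x : Fin 3 → ℝ) : M3 :=
  A + Smat x * Bᵀ + B * (Smat x)ᵀ + Smat x * C * (Smat x)ᵀ

/-- Partial derivative `∂_k f` at `x`. -/
noncomputable def pder (k : Fin 3) (f : (Fin 3 → ℝ) → ℝ) (x : Fin 3 → ℝ) : ℝ :=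
  fderiv ℝ f x (Pi.single k 1)

/-!
Along a direction `v`, `K` changes at first order by the symmetrization of `S_v N`, where
`N = Bᵀ + C S_xᵀ` (this uses `Cᵀ = C`). For any matrix `N`,
`u ⬝ (S_w N) v = (u × w) ⬝ N v`, so the cyclic sum over `(u, v, w)` of
`u ⬝ (S_w N + (S_w N)ᵀ) v` consists of six terms that cancel in pairs by anticommutativity of
the cross product. Taking `u, v, w` to be basis vectors gives the Killing equation.
-/

lemma Smat_add (u v : Fin 3 → ℝ) : Smat (u + v) = Smat u + Smat v := by
  ext a b; fin_cases a <;> fin_cases b <;> simp [Smat] <;> ring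

lemma Smat_smul (c : ℝ) (v : Fin 3 → ℝ) : Smat (c • v) = c • Smat v := by
  ext a b; fin_cases a <;> fin_cases b <;> simp [Smat]

lemma vecMul_Smat (x v : Fin 3 → ℝ) : v ᵥ* Smat x = v ⨯₃ x := by
  ext a; fin_cases a <;> simp [Smat, vecMul, dotProduct, Fin.sum_univ_three, cross_apply] <;> ring

def symmSmatMul (N : M3) (v : Fin 3 → ℝ) : M3 :=
  Smat v * N + (Smat v * N)ᵀ

lemma dotProduct_Smat_mul_mulVec (N : M3) (u v w : Fin 3 → ℝ) :
    u ⬝ᵥ (Smat w * N) *ᵥ v = (u ⨯₃ w) ⬝ᵥ N *ᵥ v := by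
  rw [← mulVec_mulVec, dotProduct_mulVec, vecMul_Smat]

lemma dotProduct_symmSmatMul_mulVec (N : M3) (u v w : Fin 3 → ℝ) :
    u ⬝ᵥ symmSmatMul N w *ᵥ v = (u ⨯₃ w) ⬝ᵥ N *ᵥ v + (v ⨯₃ w) ⬝ᵥ N *ᵥ u := by
  rw [symmSmatMul, add_mulVec, dotProduct_add, dotProduct_transpose_mulVec,
    dotProduct_Smat_mul_mulVec, dotProduct_Smat_mul_mulVec]

theorem cyclic_sum_dotProduct_symmSmatMul_mulVec (N : M3) (u v w : Fin 3 → ℝ) :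
    u ⬝ᵥ symmSmatMul N w *ᵥ v + v ⬝ᵥ symmSmatMul N u *ᵥ w + w ⬝ᵥ symmSmatMul N v *ᵥ u = 0 := by
  simp only [dotProduct_symmSmatMul_mulVec]
  rw [← cross_anticomm u w, ← cross_anticomm u v, ← cross_anticomm v w]
  simp only [neg_dotProduct]
  ring

lemma KABC_add_smul (A B C : M3) (hC : C.IsSymm) (x v : Fin 3 → ℝ) (t : ℝ) :
    KABC A B C (x + t • v) = KABC A B C x + t • symmSmatMul (Bᵀ + C * (Smat x)ᵀ) v
      + t ^ 2 • (Smat v * C * (Smat v)ᵀ) := by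
  simp only [KABC, symmSmatMul, Smat_add, Smat_smul, transpose_add, transpose_smul,
    transpose_mul, transpose_transpose, hC.eq, add_mul, mul_add, Matrix.smul_mul,
    Matrix.mul_smul, Matrix.mul_assoc]
  module

lemma hasLineDerivAt_KABC_apply (A B C : M3) (hC : C.IsSymm) (x v : Fin 3 → ℝ) (i j : Fin 3) :
    HasLineDerivAt ℝ (fun y => KABC A B C y i j)
      (symmSmatMul (Bᵀ + C * (Smat x)ᵀ) v i j) x v := by
  have hpoly := (((hasDerivAt_id (0 : ℝ)).mul_const (symmSmatMul (Bᵀ + C * (Smat x)ᵀ) v i j)).add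
    (((hasDerivAt_id (0 : ℝ)).pow 2).mul_const ((Smat v * C * (Smat v)ᵀ) i j))).const_add
    (KABC A B C x i j)
  simpa [HasLineDerivAt, KABC_add_smul A B C hC, add_assoc] using hpoly

@[fun_prop]
lemma differentiable_Smat_apply (a b : Fin 3) : Differentiable ℝ (fun y => Smat y a b) := by
  fin_cases a <;> fin_cases b <;> simp [Smat] <;> fun_prop

lemma differentiable_KABC_apply (A B C : M3) (i j : Fin 3) :
    Differentiable ℝ (fun y => KABC A B C y i j) := by
  simp only [KABC, Matrix.add_apply, Matrix.mul_apply, Matrix.transpose_apply]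
  fun_prop

lemma pder_KABC_apply (A B C : M3) (hC : C.IsSymm) (x : Fin 3 → ℝ) (i j k : Fin 3) :
    pder k (fun y => KABC A B C y i j) x
      = Pi.single i 1 ⬝ᵥ symmSmatMul (Bᵀ + C * (Smat x)ᵀ) (Pi.single k 1) *ᵥ Pi.single j 1 := by
  rw [pder, ← (differentiable_KABC_apply A B C i j x).lineDeriv_eq_fderiv,
    (hasLineDerivAt_KABC_apply A B C hC x _ i j).lineDeriv]
  simp

theorem KABC_satisfies_Killing_equation_general
    (A B C : M3) (hC : C.IsSymm)
    (x : Fin 3 → ℝ) (i j k : Fin 3) :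
    pder k (fun y => KABC A B C y i j) x
      + pder i (fun y => KABC A B C y j k) x
      + pder j (fun y => KABC A B C y k i) x = 0 := by
  simp only [pder_KABC_apply A B C hC]
  exact cyclic_sum_dotProduct_symmSmatMul_mulVec _ _ _ _

/-- `K_{A,B,C}` satisfies the valence-two Killing tensor equation on
Euclidean 3-space: the total symmetrization of `∂_k K_{ij}` vanishes. -/
theorem KABC_satisfies_Killing_equation
    (A B C : M3) (hA : A.IsSymm) (hC : C.IsSymm)
    (x : Fin 3 → ℝ) (i j k : Fin 3) :
    pder k (fun y => KABC A B C y i j) x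
      + pder i (fun y => KABC A B C y j k) x
      + pder j (fun y => KABC A B C y k i) x = 0 :=
  KABC_satisfies_Killing_equation_general A B C hC x i j k
end

section
/- Canonical form of a rotational Killing vector: if A, C ∈ ℝ³ satisfy C ≠ 0 and ⟨A, C⟩ = 0 (i.e. Δ₁ ≠ 0, Δ₂ = 0), then there exist λ ∈ SO(3) and δ ∈ ℝ³ such that λᵀ(A + δ × C) = 0 and λᵀC = (0, 0, ‖C‖); consequently λᵀ V_{A,C}(λ x̃ + δ) = x̃ × (‖C‖·e₃) for all x̃ ∈ ℝ³, with ‖C‖ ≠ 0. In particular, the equation δ × C = −A is solvable for δ precisely because ⟨A, C⟩ = 0 and C ≠ 0. -/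
open Matrix

/-- Membership in SO(3). -/
def SO3 (l : M3) : Prop := lᵀ * l = 1 ∧ l.det = 1

/-- The Killing vector field `V_{A,C}(x) = A + x × C`. -/
def VAC (A C : Fin 3 → ℝ) (x : Fin 3 → ℝ) : Fin 3 → ℝ :=
  A + crossProduct x C

/-!
Since `⟨A, C⟩ = 0`, the triple product expansion `(A × C) × C = ⟨A, C⟩ C - ⟨C, C⟩ A` shows that
`δ = (A × C) / ⟨C, C⟩` solves `δ × C = -A`. For the rotation, complete `u = C / ‖C‖` by a unit
vector `a ⟂ u` to the positively oriented orthonormal frame `(a, u × a, u)`; the matrix `λ`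
with these columns lies in SO(3) and satisfies `λᵀ C = ‖C‖ e₃`. Finally a rotation commutes
with the cross product, so the translated and rotated field `λᵀ V_{A,C}(λ x̃ + δ)` is
`λᵀ (λ x̃ × C) = x̃ × λᵀ C`.
-/

lemma dotProduct_self_pos {R n : Type*} [Fintype n] [Ring R] [LinearOrder R]
    [IsStrictOrderedRing R] {v : n → R} (hv : v ≠ 0) : 0 < v ⬝ᵥ v :=
  lt_of_le_of_ne (Finset.sum_nonneg fun i _ => mul_self_nonneg (v i))
    (Ne.symm (dotProduct_self_eq_zero.not.mpr hv))

lemma inv_sqrt_smul_dotProduct_self {n : Type*} [Fintype n] {v : n → ℝ} (hv : v ≠ 0) :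
    ((√(v ⬝ᵥ v))⁻¹ • v) ⬝ᵥ ((√(v ⬝ᵥ v))⁻¹ • v) = 1 := by
  have hpos := dotProduct_self_pos hv
  rw [smul_dotProduct, dotProduct_smul, smul_smul, smul_eq_mul, ← mul_inv,
    Real.mul_self_sqrt hpos.le, inv_mul_cancel₀ hpos.ne']

lemma inv_dotProduct_self_smul_cross_cross_self {K : Type*} [Field K] {A C : Fin 3 → K}
    (hC : C ⬝ᵥ C ≠ 0) (hAC : A ⬝ᵥ C = 0) : ((C ⬝ᵥ C)⁻¹ • A ⨯₃ C) ⨯₃ C = -A := by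
  rw [LinearMap.map_smul₂, cross_cross_eq_smul_sub_smul, hAC, zero_smul, zero_sub, smul_neg,
    smul_smul, inv_mul_cancel₀ hC, one_smul]

lemma Matrix.transpose_mulVec_cross_mulVec {R : Type*} [CommRing R]
    (M : Matrix (Fin 3) (Fin 3) R) (u v : Fin 3 → R) :
    Mᵀ *ᵥ (M *ᵥ u) ⨯₃ (M *ᵥ v) = M.det • u ⨯₃ v := by
  ext i
  fin_cases i <;>
  · simp [cross_apply, mulVec, dotProduct, det_fin_three, Fin.sum_univ_three]
    ring

lemma SO3.transpose_mulVec_VAC_mulVec_add {l : M3} (hl : SO3 l) {A C δ : Fin 3 → ℝ}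
    (hδ : A + δ ⨯₃ C = 0) (x : Fin 3 → ℝ) :
    lᵀ *ᵥ VAC A C (l *ᵥ x + δ) = x ⨯₃ (lᵀ *ᵥ C) := by
  have hC : l *ᵥ (lᵀ *ᵥ C) = C := by
    rw [mulVec_mulVec, mul_eq_one_comm.mp hl.1, one_mulVec]
  have hV : VAC A C (l *ᵥ x + δ) = (l *ᵥ x) ⨯₃ (l *ᵥ (lᵀ *ᵥ C)) := by
    rw [VAC, map_add, LinearMap.add_apply, add_left_comm, hδ, add_zero, hC]
  rw [hV, transpose_mulVec_cross_mulVec, hl.2, one_smul]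

lemma SO3_transpose_of_orthonormal {u a : Fin 3 → ℝ} (hu : u ⬝ᵥ u = 1) (ha : a ⬝ᵥ a = 1)
    (hau : a ⬝ᵥ u = 0) : SO3 (of ![a, u ⨯₃ a, u])ᵀ := by
  have hua : u ⬝ᵥ a = 0 := by rw [dotProduct_comm, hau]
  have hba : (u ⨯₃ a) ⬝ᵥ a = 0 := by rw [dotProduct_comm, dot_cross_self]
  have hbu : (u ⨯₃ a) ⬝ᵥ u = 0 := by rw [dotProduct_comm, dot_self_cross]
  have hbb : (u ⨯₃ a) ⬝ᵥ (u ⨯₃ a) = 1 := by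
    rw [cross_dot_cross, hu, ha, hua, hau]; ring
  refine ⟨?_, ?_⟩
  · rw [transpose_transpose]
    ext i j
    fin_cases i <;> fin_cases j <;>
      simp [cons_mul, vecMul_transpose, hu, ha, hau, hua, hba, hbu, hbb,
        dotProduct_comm _ (u ⨯₃ a)]
  · rw [det_transpose]
    change det ![a, u ⨯₃ a, u] = 1
    rw [← triple_product_eq_det, cross_cross_eq_smul_sub_smul]
    simp [hu, ha, hau]

lemma exists_SO3_transpose_mulVec_eq {C : Fin 3 → ℝ} (hC : C ≠ 0) :
    ∃ l : M3, SO3 l ∧ lᵀ *ᵥ C = ![0, 0, √(C ⬝ᵥ C)] := by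
  obtain ⟨a, ha, haC⟩ := exists_ne_zero_dotProduct_eq_zero C
  set n := √(C ⬝ᵥ C)
  have hn : n ≠ 0 := (Real.sqrt_pos.mpr (dotProduct_self_pos hC)).ne'
  set u := n⁻¹ • C
  set a' := (√(a ⬝ᵥ a))⁻¹ • a
  have hau : a' ⬝ᵥ u = 0 := by simp [a', u, smul_dotProduct, dotProduct_smul, haC]
  have hu : u ⬝ᵥ u = 1 := inv_sqrt_smul_dotProduct_self hC
  refine ⟨(of ![a', u ⨯₃ a', u])ᵀ,
    SO3_transpose_of_orthonormal hu (inv_sqrt_smul_dotProduct_self ha) hau, ?_⟩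
  have hCu : C = n • u := by rw [smul_smul, mul_inv_cancel₀ hn, one_smul]
  rw [transpose_transpose, hCu, mulVec_smul]
  simp [hau, hu, dotProduct_comm _ u, dot_self_cross]

/-- STATEMENT 6: canonical form of a rotational Killing vector: if `C ≠ 0` and
`⟨A,C⟩ = 0`, there are `λ ∈ SO(3)` and `δ ∈ ℝ³` with `λᵀ(A + δ × C) = 0` and
`λᵀC = (0,0,‖C‖)`, so the pulled-back field is `x̃ × (‖C‖ e₃)` with `‖C‖ ≠ 0`;
in particular `δ × C = −A` is solvable for `δ`. -/
theorem rotational_Killing_vector_canonical_form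
    (A C : Fin 3 → ℝ) (hC : C ≠ 0) (hAC : A ⬝ᵥ C = 0) :
    (∃ (l : M3) (δ : Fin 3 → ℝ), SO3 l ∧
      lᵀ.mulVec (A + crossProduct δ C) = 0 ∧
      lᵀ.mulVec C = ![0, 0, Real.sqrt (C ⬝ᵥ C)] ∧
      (∀ xt : Fin 3 → ℝ,
        lᵀ.mulVec (VAC A C (l.mulVec xt + δ)) =
          crossProduct xt ![0, 0, Real.sqrt (C ⬝ᵥ C)]) ∧
      Real.sqrt (C ⬝ᵥ C) ≠ 0) ∧
    ∃ δ : Fin 3 → ℝ, crossProduct δ C = -A := by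
  have hCC : 0 < C ⬝ᵥ C := dotProduct_self_pos hC
  obtain ⟨l, hl, hlC⟩ := exists_SO3_transpose_mulVec_eq hC
  set δ := (C ⬝ᵥ C)⁻¹ • A ⨯₃ C
  have hδ : δ ⨯₃ C = -A := inv_dotProduct_self_smul_cross_cross_self hCC.ne' hAC
  have hAδ : A + δ ⨯₃ C = 0 := by rw [hδ, add_neg_cancel]
  refine ⟨⟨l, δ, hl, by rw [hAδ, mulVec_zero], hlC, fun x => ?_, (Real.sqrt_pos.mpr hCC).ne'⟩,
    δ, hδ⟩
  rw [hl.transpose_mulVec_VAC_mulVec_add hAδ, hlC]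
end

section
/- Paraboloidal discrimination lemma: for real numbers c₁, c₂, c₃, the two conditions (c₁ + c₂ + c₃)² = c₁² + c₂² + c₃² and (c₁ + c₂ + c₃)³ = c₁³ + c₂³ + c₃³ hold simultaneously if and only if at least two of c₁, c₂, c₃ are zero, i.e. if and only if (c₁ = 0 and c₂ = 0) or (c₂ = 0 and c₃ = 0) or (c₃ = 0 and c₁ = 0). -/
/-- STATEMENT 16: paraboloidal discrimination lemma: `(c₁+c₂+c₃)² = c₁²+c₂²+c₃²`
and `(c₁+c₂+c₃)³ = c₁³+c₂³+c₃³` hold simultaneously iff at least two of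
`c₁, c₂, c₃` vanish. -/
theorem paraboloidal_discrimination (c₁ c₂ c₃ : ℝ) :
    ((c₁ + c₂ + c₃) ^ 2 = c₁ ^ 2 + c₂ ^ 2 + c₃ ^ 2 ∧
      (c₁ + c₂ + c₃) ^ 3 = c₁ ^ 3 + c₂ ^ 3 + c₃ ^ 3) ↔
    ((c₁ = 0 ∧ c₂ = 0) ∨ (c₂ = 0 ∧ c₃ = 0) ∨ (c₃ = 0 ∧ c₁ = 0)) := by
  constructor
  · rintro ⟨h1, h2⟩
    have e2 : c₁ * c₂ + c₂ * c₃ + c₃ * c₁ = 0 := by nlinarith [h1]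
    have hprod : (c₁ + c₂) * (c₂ + c₃) * (c₃ + c₁) = 0 := by nlinarith [h2]
    rcases mul_eq_zero.1 hprod with h | h
    · rcases mul_eq_zero.1 h with h | h
      · have h' : c₁ = -c₂ := by linarith
        subst h'
        have : -c₂ = 0 ∧ c₂ = 0 := by constructor <;> nlinarith [sq_nonneg c₂]
        exact Or.inl this
      · have h' : c₂ = -c₃ := by linarith
        subst h'
        have : -c₃ = 0 ∧ c₃ = 0 := by constructor <;> nlinarith [sq_nonneg c₃]
        exact Or.inr (Or.inl this)
    · have h' : c₁ = -c₃ := by linarith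
      subst h'
      have : c₃ = 0 ∧ -c₃ = 0 := by constructor <;> nlinarith [sq_nonneg c₃]
      exact Or.inr (Or.inr this)
  · rintro (⟨h, h'⟩ | ⟨h, h'⟩ | ⟨h, h'⟩) <;> subst h <;> subst h' <;> constructor <;> ring
end
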